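/- arXiv:nlin/0602042 — 3 statements merged into one kernel-verified Lean document; each statement's English description precedes it below -/
import Mathlib

section
/- Let π = {α_0,…,α_{2r}} be the admissible roots of D_{2r}^{(1)} in ℝ^{2r} and C^# the involution with C^#(e_k) = −e_{2r+1−k}. Then C^# maps α_k ↦ α_{2r−k} for k = 1,…,2r−1 and swaps α_0 with α_{2r} (and α_1 with α_{2r−1}), its (+1)- and (−1)-eigenspaces each have dimension r, and the averages β_k = (1/2)(α_k + C^#(α_k)) give an admissible root system of type A_{2r-1}^{(2)}. -/
/-!
`C^#` is minus the reversal of coordinates, so it sends `e k` to `-e (2r-1-k)`; the action on the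
roots follows by linearity. An `s`-eigenvector (`s = ±1`) satisfies `v i = -s • v (rev i)`, hence is
determined by its first `r` coordinates, and every choice of these extends. Finally
`2 β_k = α_k + α_{2r-k}` for `0 < k < 2r`, and both `∑_{k=2}^{r-1} α_k` and `∑_{k=2}^{r-1} α_{2r-k}`
telescope.
-/

namespace FoldingD

open Module Module.End

def C (R : Type*) [CommRing R] (n : ℕ) : End R (Fin n → R) := -(LinearMap.funLeft R R Fin.rev)

variable {R : Type*} [CommRing R] {n r k : ℕ}

@[simp]
lemma C_apply (v : Fin n → R) (i : Fin n) : C R n v i = -v i.rev := rfl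

lemma C_C (v : Fin n → R) : C R n (C R n v) = v := by
  ext i; simp

lemma mem_eigenspace_C_iff {s : R} (hs : s * s = 1) {v : Fin n → R} :
    v ∈ eigenspace (C R n) s ↔ ∀ i, v i = -s * v i.rev := by
  rw [mem_eigenspace_iff, funext_iff]
  refine forall_congr' fun i => ?_
  rw [C_apply, Pi.smul_apply, smul_eq_mul]
  constructor <;> intro h
  · linear_combination -s * h - v i * hs
  · linear_combination -s * h + v i.rev * hs

def extend (s : R) (w : Fin r → R) (i : Fin (2 * r)) : R :=
  if h : (i : ℕ) < r then w ⟨i, h⟩ else -s * w ⟨i.rev, by rw [Fin.val_rev]; omega⟩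

lemma extend_mem_eigenspace {s : R} (hs : s * s = 1) (w : Fin r → R) :
    extend s w ∈ eigenspace (C R (2 * r)) s := by
  rw [mem_eigenspace_C_iff hs]
  intro i
  have := Fin.val_rev i
  by_cases hi : (i : ℕ) < r
  · rw [extend, extend, dif_pos hi, dif_neg (by omega)]
    simp only [Fin.rev_rev]
    linear_combination (-w ⟨i, hi⟩) * hs
  · rw [extend, extend, dif_neg hi, dif_pos (by omega)]

lemma extend_castLE (s : R) (w : Fin r → R) (i : Fin r) :
    extend s w (Fin.castLE (by omega) i) = w i := by
  simp [extend]

lemma extend_eq_of_mem_eigenspace {s : R} (hs : s * s = 1) {v : Fin (2 * r) → R}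
    (hv : v ∈ eigenspace (C R (2 * r)) s) :
    extend s (v ∘ Fin.castLE (by omega)) = v := by
  ext i
  by_cases hi : (i : ℕ) < r
  · simp [extend, hi]
  · simp only [extend, dif_neg hi, Function.comp_apply]
    rw [(mem_eigenspace_C_iff hs).1 hv i]
    rfl

def eigenspaceCEquiv {s : R} (hs : s * s = 1) :
    eigenspace (C R (2 * r)) s ≃ₗ[R] (Fin r → R) where
  toFun v := v.1 ∘ Fin.castLE (by omega)
  map_add' _ _ := rfl
  map_smul' _ _ := rfl
  invFun w := ⟨extend s w, extend_mem_eigenspace hs w⟩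
  left_inv v := Subtype.ext (extend_eq_of_mem_eigenspace hs v.2)
  right_inv w := funext (extend_castLE s w)

lemma finrank_eigenspace_C [Nontrivial R] {s : R} (hs : s * s = 1) :
    finrank R (eigenspace (C R (2 * r)) s) = r := by
  rw [(eigenspaceCEquiv hs).finrank_eq, finrank_fin_fun]

-- Coordinates are indexed from `0`: the paper's `e_k` is `e n (k - 1)`.
def e (n k : ℕ) : Fin n → ℝ := fun i => if (i : ℕ) = k then 1 else 0

def α (r k : ℕ) : Fin (2 * r) → ℝ :=
  if k = 0 then -e (2 * r) 0 - e (2 * r) 1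
  else if k = 2 * r then e (2 * r) (2 * r - 2) + e (2 * r) (2 * r - 1)
  else e (2 * r) (k - 1) - e (2 * r) k

noncomputable def β (r k : ℕ) : Fin (2 * r) → ℝ := (1 / 2 : ℝ) • (α r k + C ℝ (2 * r) (α r k))

lemma C_e (hk : k < n) : C ℝ n (e n k) = -e n (n - 1 - k) := by
  ext i
  have := Fin.val_rev i
  simp only [C_apply, e, Pi.neg_apply, neg_inj]
  congr 1
  apply propext
  omega

lemma α_zero : α r 0 = -e (2 * r) 0 - e (2 * r) 1 := rfl

lemma α_two_mul (hr : 0 < r) : α r (2 * r) = e (2 * r) (2 * r - 2) + e (2 * r) (2 * r - 1) := by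
  rw [α, if_neg (by omega), if_pos rfl]

lemma α_of_pos_of_lt (h0 : 0 < k) (hk : k < 2 * r) : α r k = e (2 * r) (k - 1) - e (2 * r) k := by
  rw [α, if_neg (by omega), if_neg (by omega)]

lemma C_α_of_pos_of_lt (h0 : 0 < k) (hk : k < 2 * r) : C ℝ (2 * r) (α r k) = α r (2 * r - k) := by
  rw [α_of_pos_of_lt h0 hk, α_of_pos_of_lt (by omega) (by omega), map_sub, C_e (by omega),
    C_e hk, show 2 * r - 1 - (k - 1) = 2 * r - k by omega, show 2 * r - k - 1 = 2 * r - 1 - k by omega]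
  abel

lemma C_α_zero (hr : 0 < r) : C ℝ (2 * r) (α r 0) = α r (2 * r) := by
  rw [α_zero, α_two_mul hr, map_sub, map_neg, C_e (by omega), C_e (by omega),
    show 2 * r - 1 - 0 = 2 * r - 1 by omega, show 2 * r - 1 - 1 = 2 * r - 2 by omega]
  abel

lemma C_α_two_mul (hr : 0 < r) : C ℝ (2 * r) (α r (2 * r)) = α r 0 := by
  rw [← C_α_zero hr, C_C]

lemma β_of_pos_of_lt (h0 : 0 < k) (hk : k < 2 * r) :
    β r k = (1 / 2 : ℝ) • (α r k + α r (2 * r - k)) := by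
  rw [β, C_α_of_pos_of_lt h0 hk]

lemma sum_Ico_α (hr : 2 ≤ r) : ∑ k ∈ Finset.Ico 2 r, α r k = e (2 * r) 1 - e (2 * r) (r - 1) := by
  rw [Finset.sum_congr rfl fun k hk => ?_, Finset.sum_Ico_sub (fun j => -e (2 * r) (j - 1)) hr]
  · simp only [sub_neg_eq_add, neg_add_eq_sub]
  · rw [Finset.mem_Ico] at hk
    rw [α_of_pos_of_lt (by omega) (by omega), Nat.add_sub_cancel]
    abel

lemma sum_Ico_α_two_mul_sub (hr : 2 ≤ r) :
    ∑ k ∈ Finset.Ico 2 r, α r (2 * r - k) = e (2 * r) r - e (2 * r) (2 * r - 2) := by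
  rw [Finset.sum_congr rfl fun k hk => ?_, Finset.sum_Ico_sub (fun j => e (2 * r) (2 * r - j)) hr,
    show 2 * r - r = r by omega]
  rw [Finset.mem_Ico] at hk
  rw [α_of_pos_of_lt (by omega) (by omega), show 2 * r - k - 1 = 2 * r - (k + 1) by omega]

lemma β_relation (hr : 2 ≤ r) :
    β r 0 + β r 1 + ∑ k ∈ Finset.Icc 2 (r - 1), (2 : ℝ) • β r k + β r r = 0 := by
  have hsum : ∑ k ∈ Finset.Icc 2 (r - 1), (2 : ℝ) • β r k =
      ∑ k ∈ Finset.Ico 2 r, α r k + ∑ k ∈ Finset.Ico 2 r, α r (2 * r - k) := by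
    rw [← Finset.Ico_add_one_right_eq_Icc, Nat.sub_add_cancel (by omega), ← Finset.sum_add_distrib]
    refine Finset.sum_congr rfl fun k hk => ?_
    rw [Finset.mem_Ico] at hk
    rw [β_of_pos_of_lt (by omega) (by omega), smul_smul]
    norm_num
  have hends : β r 0 + β r 1 = e (2 * r) (2 * r - 2) - e (2 * r) 1 := by
    rw [β, C_α_zero (by omega), α_zero, α_two_mul (by omega), β_of_pos_of_lt (by omega) (by omega),
      α_of_pos_of_lt (by omega) (by omega), α_of_pos_of_lt (k := 2 * r - 1) (by omega) (by omega),
      show 2 * r - 1 - 1 = 2 * r - 2 by omega]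
    module
  have hmiddle : β r r = e (2 * r) (r - 1) - e (2 * r) r := by
    rw [β_of_pos_of_lt (by omega) (by omega), show 2 * r - r = r by omega,
      α_of_pos_of_lt (by omega) (by omega)]
    module
  rw [hends, hsum, sum_Ico_α hr, sum_Ico_α_two_mul_sub hr, hmiddle]
  abel

end FoldingD

/-- Folding `D_{2r}^{(1)} → A_{2r-1}^{(2)}`: the involution `C^#(e_k) = -e_{2r+1-k}`
of `ℝ^{2r}` maps `α_k ↦ α_{2r-k}` for `k = 1,…,2r-1` and swaps `α_0 ↔ α_{2r}`; its
`(±1)`-eigenspaces each have dimension `r`, and the averages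
`β_k = (α_k + C^#α_k)/2`, `k = 0,…,r`, form the admissible root system of
`A_{2r-1}^{(2)}` with marks `(1,1,2,…,2,1)`:
`β_0 + β_1 + 2β_2 + ⋯ + 2β_{r-1} + β_r = 0`. -/
theorem stmt_10 (r : ℕ) (hr : 3 < r) :
    let e : ℕ → Fin (2*r) → ℝ := fun k i => if (i : ℕ) = k then 1 else 0
    let α : ℕ → Fin (2*r) → ℝ := fun k =>
      if k = 0 then -e 0 - e 1
      else if k = 2*r then e (2*r-2) + e (2*r-1)
      else e (k-1) - e k
    let Cs : (Fin (2*r) → ℝ) → (Fin (2*r) → ℝ) := fun v i => - v i.rev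
    let C : Module.End ℝ (Fin (2*r) → ℝ) := -(LinearMap.funLeft ℝ ℝ Fin.rev)
    let β : ℕ → Fin (2*r) → ℝ := fun k => (1/2 : ℝ) • (α k + Cs (α k))
    (∀ k, 1 ≤ k → k ≤ 2*r-1 → Cs (α k) = α (2*r - k)) ∧
    (Cs (α 0) = α (2*r)) ∧ (Cs (α (2*r)) = α 0) ∧
    (Module.finrank ℝ ↥(Module.End.eigenspace C 1) = r) ∧
    (Module.finrank ℝ ↥(Module.End.eigenspace C (-1)) = r) ∧
    (β 0 + β 1 + (∑ k ∈ Finset.Icc 2 (r-1), (2:ℝ) • β k) + β r = 0) := by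
  intro e α Cs C β
  exact ⟨fun k h1 h2 => FoldingD.C_α_of_pos_of_lt (r := r) (by omega) (by omega),
    FoldingD.C_α_zero (by omega), FoldingD.C_α_two_mul (by omega),
    FoldingD.finrank_eigenspace_C (by norm_num), FoldingD.finrank_eigenspace_C (by norm_num),
    FoldingD.β_relation (by omega)⟩
end

section
/- Fix the admissible roots of A_{2r}^{(1)} in ℝ^{2r+1}: α_k = e_k − e_{k+1} (k = 1,…,2r), α_0 = e_{2r+1} − e_1, and the involution C^#(e_k) = −e_{2r+2−k} for k = 1,…,2r+1 (so C^#(e_{r+1}) = −e_{r+1}). Then C^# fixes α_0 and maps α_k ↦ α_{2r+1−k} for k = 1,…,2r, the (+1)-eigenspace of C^# restricted to the span of the root system has dimension r, and the nonzero averages β_k = (1/2)(α_k + C^#(α_k)) form an admissible root system of type A_{2r}^{(2)}. -/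
/-!
The involution `v ↦ -(v ∘ rev)` sends `e_j - e_k` to `e_{2r-k} - e_{2r-j}`, which gives the
action on the simple roots. Its `(+1)`-eigenvectors are the antisymmetric vectors; they have zero
sum, and restriction to the first `r` coordinates identifies them with `ℝ^r` (the inverse extends
`f` by zero to `g` and takes `g - g ∘ rev`). Finally `2 β_k = g_k - g_{k-1}` with
`g_j = e_{2r-j} - e_j`, so `∑ 2 β_k` telescopes to `g_r - g_0 = -β_0`.
-/

open Module Module.End LinearMap Finset

section Antisymmetric

variable {K : Type*} [Field K] {n : ℕ}

theorem mem_eigenspace_neg_funLeft_rev_one_iff {v : Fin n → K} :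
    v ∈ eigenspace (-(funLeft K K (Fin.rev : Fin n → Fin n))) 1 ↔ ∀ i, v i.rev = -v i := by
  simp only [mem_eigenspace_iff, one_smul, funext_iff, LinearMap.neg_apply, Pi.neg_apply,
    funLeft_apply, neg_eq_iff_eq_neg]

variable [CharZero K]

theorem sum_eq_zero_of_comp_rev_eq_neg {v : Fin n → K} (hv : ∀ i, v i.rev = -v i) :
    ∑ i, v i = 0 := by
  have h : ∑ i, v i = -∑ i, v i := by
    rw [← sum_neg_distrib, ← Equiv.sum_comp Fin.revPerm]
    exact Fintype.sum_congr _ _ hv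
  exact self_eq_neg.mp h

theorem eigenspace_neg_funLeft_rev_one_le_ker_sum :
    eigenspace (-(funLeft K K (Fin.rev : Fin n → Fin n))) 1 ≤ ker (∑ i, proj i) :=
  fun _ hv => by
    simpa [mem_ker] using
      sum_eq_zero_of_comp_rev_eq_neg (mem_eigenspace_neg_funLeft_rev_one_iff.mp hv)

theorem finrank_eigenspace_neg_funLeft_rev_one :
    finrank K (eigenspace (-(funLeft K K (Fin.rev : Fin n → Fin n))) 1) = n / 2 := by
  set E := eigenspace (-(funLeft K K (Fin.rev : Fin n → Fin n))) 1
  let restrict : E →ₗ[K] Fin (n / 2) → K :=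
    (funLeft K K (Fin.castLE (Nat.div_le_self n 2))).comp E.subtype
  have hinj : Function.Injective restrict := by
    rw [← ker_eq_bot, Submodule.eq_bot_iff]
    rintro ⟨v, hv⟩ hzero
    rw [mem_eigenspace_neg_funLeft_rev_one_iff] at hv
    have hlow : ∀ i : Fin n, (i : ℕ) < n / 2 → v i = 0 := fun i hi =>
      congrFun hzero ⟨i, hi⟩
    ext i
    by_cases hi : (i : ℕ) < n / 2
    · exact hlow i hi
    by_cases hri : (i.rev : ℕ) < n / 2
    · simpa [hlow _ hri] using hv i
    · have hfix : i.rev = i := Fin.ext (by rw [Fin.val_rev] at hri ⊢; omega)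
      simpa [hfix, self_eq_neg] using hv i
  have hsurj : Function.Surjective restrict := by
    intro f
    let g : Fin n → K := fun i => if h : (i : ℕ) < n / 2 then f ⟨i, h⟩ else 0
    have hg : g - g ∘ Fin.rev ∈ E := mem_eigenspace_neg_funLeft_rev_one_iff.mpr fun _ => by simp
    refine ⟨⟨g - g ∘ Fin.rev, hg⟩, ?_⟩
    ext j
    have hrev : ¬ n - (j + 1) < n / 2 := by omega
    simp [restrict, g, funLeft_apply, hrev]
  rw [(LinearEquiv.ofBijective restrict ⟨hinj, hsurj⟩).finrank_eq, finrank_fin_fun]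

theorem finrank_eigenspace_neg_funLeft_rev_one_inf_ker_sum :
    finrank K ↥(eigenspace (-(funLeft K K (Fin.rev : Fin n → Fin n))) 1 ⊓
      ker (∑ i, proj i)) = n / 2 := by
  rw [inf_eq_left.mpr eigenspace_neg_funLeft_rev_one_le_ker_sum,
    finrank_eigenspace_neg_funLeft_rev_one]

end Antisymmetric

section Roots

variable {K : Type*} [Field K]

def negRev {n : ℕ} (v : Fin n → K) : Fin n → K := fun i => -v i.rev

variable (K) in
def stdVec (n k : ℕ) : Fin n → K := fun i => if (i : ℕ) = k then 1 else 0

theorem stdVec_comp_rev {n k : ℕ} (hk : k < n) :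
    (fun i : Fin n => stdVec K n k i.rev) = stdVec K n (n - 1 - k) := by
  ext i
  simp only [stdVec, Fin.val_rev]
  split_ifs <;> first | rfl | omega

theorem negRev_stdVec_sub {n j k : ℕ} (hj : j < n) (hk : k < n) :
    negRev (stdVec K n j - stdVec K n k) = stdVec K n (n - 1 - k) - stdVec K n (n - 1 - j) := by
  ext i
  simp only [negRev, Pi.sub_apply, ← congrFun (stdVec_comp_rev hj) i,
    ← congrFun (stdVec_comp_rev hk) i]
  abel

variable (K) in
/-- `α_0 = e_{2r+1} - e_1`, `α_k = e_k - e_{k+1}`, with `e_j` stored as `stdVec K _ (j - 1)`. -/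
def affineSimpleRoot (r k : ℕ) : Fin (2 * r + 1) → K :=
  if k = 0 then stdVec K _ (2 * r) - stdVec K _ 0 else stdVec K _ (k - 1) - stdVec K _ k

variable (K) in
def foldedRoot (r k : ℕ) : Fin (2 * r + 1) → K :=
  (1 / 2 : K) • (affineSimpleRoot K r k + negRev (affineSimpleRoot K r k))

variable {r k : ℕ}

theorem affineSimpleRoot_of_ne_zero (hk : k ≠ 0) :
    affineSimpleRoot K r k = stdVec K _ (k - 1) - stdVec K _ k := if_neg hk

theorem negRev_affineSimpleRoot_zero :
    negRev (affineSimpleRoot K r 0) = affineSimpleRoot K r 0 := by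
  rw [affineSimpleRoot, if_pos rfl, negRev_stdVec_sub (by omega) (by omega)]
  simp

theorem negRev_affineSimpleRoot (hk₁ : 1 ≤ k) (hk₂ : k ≤ 2 * r) :
    negRev (affineSimpleRoot K r k) = affineSimpleRoot K r (2 * r + 1 - k) := by
  rw [affineSimpleRoot_of_ne_zero (by omega), affineSimpleRoot_of_ne_zero (by omega),
    negRev_stdVec_sub (by omega) (by omega)]
  congr 2 <;> omega

variable [CharZero K]

theorem foldedRoot_zero : foldedRoot K r 0 = affineSimpleRoot K r 0 := by
  rw [foldedRoot, negRev_affineSimpleRoot_zero, ← two_smul K, smul_smul]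
  norm_num

theorem two_smul_foldedRoot (hk₁ : 1 ≤ k) (hk₂ : k ≤ 2 * r) :
    (2 : K) • foldedRoot K r k =
      affineSimpleRoot K r k + affineSimpleRoot K r (2 * r + 1 - k) := by
  rw [foldedRoot, smul_smul, negRev_affineSimpleRoot hk₁ hk₂]
  norm_num

theorem foldedRoot_ne_zero (hr : 1 ≤ r) (hk : k ≤ r) : foldedRoot K r k ≠ 0 := by
  rcases Nat.eq_zero_or_pos k with rfl | hk₀
  · rw [foldedRoot_zero]
    intro h
    have := congrFun h ⟨0, by omega⟩
    simp [affineSimpleRoot, stdVec, show r ≠ 0 by omega] at this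
  · intro h
    have := congrFun (two_smul_foldedRoot (K := K) (r := r) hk₀ (by omega)) ⟨k - 1, by omega⟩
    rw [h, smul_zero, affineSimpleRoot_of_ne_zero (by omega),
      affineSimpleRoot_of_ne_zero (by omega)] at this
    simp [stdVec, show k - 1 ≠ k by omega, show k - 1 ≠ 2 * r + 1 - k - 1 by omega,
      show k - 1 ≠ 2 * r + 1 - k by omega] at this

theorem foldedRoot_zero_add_sum_two_smul :
    foldedRoot K r 0 + ∑ k ∈ Icc 1 r, (2 : K) • foldedRoot K r k = 0 := by
  let g : ℕ → Fin (2 * r + 1) → K := fun j => stdVec K _ (2 * r - j) - stdVec K _ j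
  have hstep : ∀ j < r, (2 : K) • foldedRoot K r (j + 1) = g (j + 1) - g j := by
    intro j hj
    rw [two_smul_foldedRoot (by omega) (by omega), affineSimpleRoot_of_ne_zero (by omega),
      affineSimpleRoot_of_ne_zero (by omega)]
    simp only [g, show 2 * r + 1 - (j + 1) = 2 * r - j by omega,
      show 2 * r - j - 1 = 2 * r - (j + 1) by omega, Nat.add_sub_cancel]
    abel
  have hsum : ∑ k ∈ Icc 1 r, (2 : K) • foldedRoot K r k = g r - g 0 := by
    rw [← Ico_add_one_right_eq_Icc, sum_Ico_eq_sum_range, ← sum_range_sub]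
    exact sum_congr rfl fun j hj => by rw [add_comm 1 j, hstep j (by simpa using hj)]
  rw [hsum, foldedRoot_zero, affineSimpleRoot, if_pos rfl]
  simp [g, show 2 * r - r = r by omega]

end Roots

/-- Folding `A_{2r}^{(1)} → A_{2r}^{(2)}`: the involution `C^#(e_k) = -e_{2r+2-k}`
of `ℝ^{2r+1}` fixes `α_0` and maps `α_k ↦ α_{2r+1-k}`; the `(+1)`-eigenspace meets
the span of the root system (the zero-sum hyperplane `V`) in dimension `r`, and the
nonzero averages `β_k = (α_k + C^#α_k)/2`, `k = 0,…,r`, form the admissible root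
system of `A_{2r}^{(2)}` with marks `(1,2,…,2)`: `β_0 + 2β_1 + ⋯ + 2β_r = 0`. -/
theorem stmt_15 (r : ℕ) (hr : 1 ≤ r) :
    let e : ℕ → Fin (2*r+1) → ℝ := fun k i => if (i : ℕ) = k then 1 else 0
    let α : ℕ → Fin (2*r+1) → ℝ := fun k =>
      if k = 0 then e (2*r) - e 0 else e (k-1) - e k
    let Cs : (Fin (2*r+1) → ℝ) → (Fin (2*r+1) → ℝ) := fun v i => - v i.rev
    let C : Module.End ℝ (Fin (2*r+1) → ℝ) := -(LinearMap.funLeft ℝ ℝ Fin.rev)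
    let V : Submodule ℝ (Fin (2*r+1) → ℝ) :=
      LinearMap.ker (∑ i, LinearMap.proj i : (Fin (2*r+1) → ℝ) →ₗ[ℝ] ℝ)
    let β : ℕ → Fin (2*r+1) → ℝ := fun k => (1/2 : ℝ) • (α k + Cs (α k))
    (Cs (α 0) = α 0) ∧
    (∀ k, 1 ≤ k → k ≤ 2*r → Cs (α k) = α (2*r+1 - k)) ∧
    (Module.finrank ℝ ↥(Module.End.eigenspace C 1 ⊓ V) = r) ∧
    (∀ k ≤ r, β k ≠ 0) ∧
    (β 0 + ∑ k ∈ Finset.Icc 1 r, (2:ℝ) • β k = 0) := by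
  intro e α Cs C V β
  exact ⟨negRev_affineSimpleRoot_zero, fun k hk₁ hk₂ => negRev_affineSimpleRoot hk₁ hk₂,
    finrank_eigenspace_neg_funLeft_rev_one_inf_ker_sum.trans (by omega),
    fun k hk => foldedRoot_ne_zero hr hk, foldedRoot_zero_add_sum_two_smul⟩
end

section
/- Let π = {α_0,…,α_{2r+1}} be the admissible roots of D_{2r+1}^{(1)} in ℝ^{2r+1} and C^# the involution with C^#(e_k) = −e_{2r+2−k} (so C^#(e_{r+1}) = −e_{r+1}). Then C^# maps α_k ↦ α_{2r+1−k} for k = 0,…,2r+1 and its (+1)-eigenspace has dimension r while its (−1)-eigenspace has dimension r+1; the averages β_k = (1/2)(α_k + C^#(α_k)), k = 0,…,r, form an admissible root system of type B_r^{(1)}. -/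
/-!
`C^#` is minus the reversal of coordinates. It is an involution of trace `-1`, since the
reversal of `2r+1` coordinates fixes only the middle one. For an involution `C` the map
`(1 + εC)/2`, `ε = ±1`, projects onto the `ε`-eigenspace, so its trace `(2r + 1 - ε)/2` is the
dimension of that eigenspace.

Since `C^#α_k = α_{2r+1-k}`, we have `2β_k = α_k + α_{2r+1-k}`, so twice the `B_r^{(1)}` relation is
the relation `α_0 + α_1 + 2α_2 + ⋯ + 2α_{2r-1} + α_{2r} + α_{2r+1} = 0` of `D_{2r+1}^{(1)}`.
-/

open Module Module.End Finset

theorem LinearMap.trace_funLeft {R ι : Type*} [CommRing R] [Fintype ι] [DecidableEq ι]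
    (σ : ι → ι) : LinearMap.trace R (ι → R) (LinearMap.funLeft R R σ) = #{i | σ i = i} := by
  rw [LinearMap.trace_eq_matrix_trace R (Pi.basisFun R ι), Matrix.trace]
  simp [Pi.single_apply]

theorem Module.End.finrank_eigenspace_of_mul_self_eq_one {K V : Type*} [Field K]
    [AddCommGroup V] [Module K V] [FiniteDimensional K V] (h2 : (2 : K) ≠ 0) {C : End K V}
    (hC : C * C = 1) {ε : K} (hε : ε * ε = 1) :
    2 * (finrank K (eigenspace C ε) : K) = finrank K V + ε * LinearMap.trace K V C := by
  have hCC (x : V) : C (C x) = x := congr($hC x)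
  have hP : LinearMap.IsProj (eigenspace C ε) ((2 : K)⁻¹ • (1 + ε • C)) := by
    refine ⟨fun x => ?_, fun x hx => ?_⟩
    · rw [mem_eigenspace_iff]
      simp only [LinearMap.smul_apply, LinearMap.add_apply, one_apply, map_smul, map_add, hCC]
      rw [smul_comm ε, smul_add ε, smul_smul, hε, one_smul, add_comm]
    · rw [mem_eigenspace_iff] at hx
      simp only [LinearMap.smul_apply, LinearMap.add_apply, one_apply, hx, smul_smul, hε]
      rw [one_smul, ← two_smul K x, smul_smul, inv_mul_cancel₀ h2, one_smul]
  rw [← hP.trace]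
  simp only [map_smul, map_add, LinearMap.trace_one, smul_eq_mul]
  field_simp

theorem Fin.filter_rev_eq_self (n : ℕ) :
    ({i | i.rev = i} : Finset (Fin (2 * n + 1))) = {⟨n, by omega⟩} := by
  ext i
  simp [Fin.ext_iff, Fin.val_rev]
  omega

namespace Folding

def revNeg (n : ℕ) : End ℝ (Fin n → ℝ) := -LinearMap.funLeft ℝ ℝ Fin.rev

theorem revNeg_mul_self (n : ℕ) : revNeg n * revNeg n = 1 := by
  ext v i
  simp [revNeg]

theorem trace_revNeg (n : ℕ) : LinearMap.trace ℝ _ (revNeg (2 * n + 1)) = -1 := by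
  rw [revNeg, map_neg, LinearMap.trace_funLeft, Fin.filter_rev_eq_self, card_singleton,
    Nat.cast_one]

theorem finrank_eigenspace_one_revNeg (n : ℕ) :
    finrank ℝ (eigenspace (revNeg (2 * n + 1)) 1) = n := by
  have h := finrank_eigenspace_of_mul_self_eq_one two_ne_zero
    (revNeg_mul_self (2 * n + 1)) (one_mul (1 : ℝ))
  rw [trace_revNeg, finrank_fin_fun] at h
  push_cast at h
  exact_mod_cast (by linarith : (finrank ℝ (eigenspace (revNeg (2 * n + 1)) 1) : ℝ) = n)

theorem finrank_eigenspace_neg_one_revNeg (n : ℕ) :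
    finrank ℝ (eigenspace (revNeg (2 * n + 1)) (-1)) = n + 1 := by
  have h := finrank_eigenspace_of_mul_self_eq_one two_ne_zero
    (revNeg_mul_self (2 * n + 1)) (by norm_num : (-1 : ℝ) * -1 = 1)
  rw [trace_revNeg, finrank_fin_fun] at h
  push_cast at h
  exact_mod_cast
    (by linarith : (finrank ℝ (eigenspace (revNeg (2 * n + 1)) (-1)) : ℝ) = n + 1)

/-- Coordinates are indexed from `0`: `stdVec n k` is the paper's `e_{k+1}`. -/
def stdVec (n k : ℕ) : Fin n → ℝ := fun i => if (i : ℕ) = k then 1 else 0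

theorem revNeg_stdVec {n k : ℕ} (hk : k < n) :
    revNeg n (stdVec n k) = -stdVec n (n - 1 - k) := by
  funext i
  simp only [revNeg, stdVec, LinearMap.neg_apply, LinearMap.funLeft_apply, Pi.neg_apply,
    Fin.val_rev]
  split_ifs <;> first | rfl | omega

def rootD (r k : ℕ) : Fin (2 * r + 1) → ℝ :=
  if k = 0 then -stdVec _ 0 - stdVec _ 1
  else if k = 2 * r + 1 then stdVec _ (2 * r - 1) + stdVec _ (2 * r)
  else stdVec _ (k - 1) - stdVec _ k

namespace rootD

variable {r k : ℕ}

theorem zero : rootD r 0 = -stdVec _ 0 - stdVec _ 1 := rfl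

theorem last : rootD r (2 * r + 1) = stdVec _ (2 * r - 1) + stdVec _ (2 * r) := by
  simp [rootD]

theorem of_pos_of_le (h₁ : 0 < k) (h₂ : k ≤ 2 * r) :
    rootD r k = stdVec _ (k - 1) - stdVec _ k := by
  simp only [rootD, if_neg h₁.ne', if_neg (show k ≠ 2 * r + 1 by omega)]

end rootD

theorem revNeg_rootD {r k : ℕ} (hr : 1 ≤ r) (hk : k ≤ 2 * r + 1) :
    revNeg _ (rootD r k) = rootD r (2 * r + 1 - k) := by
  rcases Nat.eq_zero_or_pos k with rfl | hk₀
  · rw [rootD.zero, Nat.sub_zero, rootD.last, map_sub, map_neg, revNeg_stdVec (by omega),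
      revNeg_stdVec (by omega)]
    simp only [show 2 * r + 1 - 1 - 0 = 2 * r by omega,
      show 2 * r + 1 - 1 - 1 = 2 * r - 1 by omega]
    abel
  rcases hk.eq_or_lt with rfl | hk
  · rw [rootD.last, Nat.sub_self, rootD.zero, map_add, revNeg_stdVec (by omega),
      revNeg_stdVec (by omega)]
    simp only [show 2 * r + 1 - 1 - (2 * r - 1) = 1 by omega,
      show 2 * r + 1 - 1 - 2 * r = 0 by omega]
    abel
  · rw [rootD.of_pos_of_le hk₀ (by omega), rootD.of_pos_of_le (by omega) (by omega), map_sub,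
      revNeg_stdVec (by omega), revNeg_stdVec (by omega)]
    simp only [show 2 * r + 1 - 1 - (k - 1) = 2 * r + 1 - k by omega,
      show 2 * r + 1 - 1 - k = 2 * r + 1 - k - 1 by omega]
    abel

theorem sum_Ico_rootD {r : ℕ} (hr : 1 ≤ r) :
    ∑ k ∈ Ico 2 (2 * r), rootD r k = stdVec _ 1 - stdVec _ (2 * r - 1) := by
  have hshift := sum_Ico_add' (rootD r) 1 (2 * r - 1) 1
  rw [show 2 * r - 1 + 1 = 2 * r by omega] at hshift
  rw [← hshift, sum_congr rfl fun k hk => rootD.of_pos_of_le (by omega) (by simp at hk; omega)]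
  simp only [Nat.add_sub_cancel]
  rw [← neg_sub, ← sum_Ico_sub (stdVec (2 * r + 1)) (by omega), ← sum_neg_distrib]
  simp only [neg_sub]

theorem rootD_null {r : ℕ} (hr : 1 ≤ r) :
    rootD r 0 + rootD r 1 + (2 : ℝ) • ∑ k ∈ Ico 2 (2 * r), rootD r k + rootD r (2 * r)
      + rootD r (2 * r + 1) = 0 := by
  rw [sum_Ico_rootD hr, rootD.zero, rootD.of_pos_of_le one_pos (by omega),
    rootD.of_pos_of_le (by omega) le_rfl, rootD.last]
  module

noncomputable def foldedRoot (r k : ℕ) : Fin (2 * r + 1) → ℝ :=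
  (1 / 2 : ℝ) • (rootD r k + revNeg _ (rootD r k))

theorem two_smul_foldedRoot {r k : ℕ} (hr : 1 ≤ r) (hk : k ≤ 2 * r + 1) :
    (2 : ℝ) • foldedRoot r k = rootD r k + rootD r (2 * r + 1 - k) := by
  rw [foldedRoot, smul_smul, revNeg_rootD hr hk]
  norm_num

theorem foldedRoot_null {r : ℕ} (hr : 1 ≤ r) :
    foldedRoot r 0 + foldedRoot r 1 + ∑ k ∈ Icc 2 r, (2 : ℝ) • foldedRoot r k = 0 := by
  have hfold : ∑ k ∈ Icc 2 r, (2 : ℝ) • foldedRoot r k = ∑ k ∈ Ico 2 (2 * r), rootD r k := by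
    rw [sum_congr rfl fun k hk => two_smul_foldedRoot hr (by simp at hk; omega),
      sum_add_distrib, ← Ico_add_one_right_eq_Icc, sum_Ico_reflect _ _ (by omega),
      show 2 * r + 1 + 1 - (r + 1) = r + 1 by omega, show 2 * r + 1 + 1 - 2 = 2 * r by omega,
      sum_Ico_consecutive _ (by omega) (by omega)]
  have h₀ := two_smul_foldedRoot hr (k := 0) (by omega)
  have h₁ := two_smul_foldedRoot hr (k := 1) (by omega)
  rw [Nat.sub_zero] at h₀
  rw [show 2 * r + 1 - 1 = 2 * r by omega] at h₁
  apply smul_right_injective _ (two_ne_zero : (2 : ℝ) ≠ 0)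
  simp only [smul_add, h₀, h₁, hfold, smul_zero]
  rw [← rootD_null hr]
  abel

end Folding

/-- Folding `D_{2r+1}^{(1)} → B_r^{(1)}`: the involution `C^#(e_k) = -e_{2r+2-k}`
of `ℝ^{2r+1}` maps each admissible root `α_k` of `D_{2r+1}^{(1)}` to `α_{2r+1-k}`;
its `(+1)`-eigenspace has dimension `r` and its `(-1)`-eigenspace dimension `r+1`;
the averages `β_k = (α_k + C^#α_k)/2`, `k = 0,…,r`, form the admissible root system
of `B_r^{(1)}`: `β_0 + β_1 + 2β_2 + ⋯ + 2β_r = 0`. -/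
theorem stmt_16 (r : ℕ) (hr : 2 ≤ r) :
    let e : ℕ → Fin (2*r+1) → ℝ := fun k i => if (i : ℕ) = k then 1 else 0
    let α : ℕ → Fin (2*r+1) → ℝ := fun k =>
      if k = 0 then -e 0 - e 1
      else if k = 2*r+1 then e (2*r-1) + e (2*r)
      else e (k-1) - e k
    let Cs : (Fin (2*r+1) → ℝ) → (Fin (2*r+1) → ℝ) := fun v i => - v i.rev
    let C : Module.End ℝ (Fin (2*r+1) → ℝ) := -(LinearMap.funLeft ℝ ℝ Fin.rev)
    let β : ℕ → Fin (2*r+1) → ℝ := fun k => (1/2 : ℝ) • (α k + Cs (α k))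
    (∀ k ≤ 2*r+1, Cs (α k) = α (2*r+1 - k)) ∧
    (Module.finrank ℝ ↥(Module.End.eigenspace C 1) = r) ∧
    (Module.finrank ℝ ↥(Module.End.eigenspace C (-1)) = r + 1) ∧
    (β 0 + β 1 + ∑ k ∈ Finset.Icc 2 r, (2:ℝ) • β k = 0) := by
  have hr₁ : 1 ≤ r := by omega
  exact ⟨fun k hk => Folding.revNeg_rootD hr₁ hk, Folding.finrank_eigenspace_one_revNeg r,
    Folding.finrank_eigenspace_neg_one_revNeg r, Folding.foldedRoot_null hr₁⟩
end
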